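/- Let X, Y, U be compact metric spaces, μ_{xy} a probability measure on X × Y with second marginal μ_y, and (π_n) a sequence of L-Lipschitz kernels π_n: Y → P(U) (Lipschitz with respect to W_1 on P(U)) with U finite and Y a compact subset of a Hilbert space. If the joint measures h_n = μ_{xy} ⊗ π_n converge weakly to some h ∈ P(X × Y × U), then there exists an L-Lipschitz kernel π: Y → P(U) such that h = μ_{xy} ⊗ π. -/

import Mathlib

/-!
Testing `W1` against the 1-Lipschitz bump `δ • 1_{u}`, where `δ` is the least distance between
distinct points of `U`, shows that the weight vectors `y ↦ (πn n y {u})_u` are uniformly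
`(L / δ)`-Lipschitz maps from the compact set `S` into the standard simplex. By Arzelà–Ascoli a
subsequence converges pointwise to a continuous limit `p`. The kernel `π` with weights `p`
inherits the `W1` bound, and dominated convergence in `∫ g d(μxy ⊗ πn) = ∫∫ g(a, u) dπn(a) dμxy`
identifies the weak limit `h` with `μxy ⊗ π`.
-/

open MeasureTheory Filter

/-- The 1-Wasserstein distance via Kantorovich–Rubinstein duality. -/
noncomputable def W1 {α : Type*} [MetricSpace α] [MeasurableSpace α]
    (μ ν : Measure α) : ℝ :=
  ⨆ f : {f : α → ℝ // LipschitzWith 1 f}, (∫ x, f.1 x ∂μ - ∫ x, f.1 x ∂ν)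

/-- The joint measure `μ ⊗ π` of a measure and a kernel. -/
noncomputable def jointMeasure {A U : Type*} [MeasurableSpace A] [MeasurableSpace U]
    (μ : Measure A) (π : A → Measure U) : Measure (A × U) :=
  μ.bind fun a => (Measure.dirac a).prod (π a)

open ProbabilityTheory Topology
open scoped NNReal ENNReal BoundedContinuousFunction

lemma exists_pos_le_dist_of_ne (U : Type*) [Finite U] [MetricSpace U] :
    ∃ δ > 0, ∀ u v : U, u ≠ v → δ ≤ dist u v := by
  by_cases h : (Set.univ : Set U).Nontrivial
  · exact ⟨_, Set.finite_univ.infsep_pos_iff_nontrivial.2 h,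
      fun u v huv => Set.infsep_le_dist_of_mem trivial trivial huv⟩
  · exact ⟨1, one_pos, fun u v huv => absurd ⟨u, trivial, v, trivial, huv⟩ h⟩

lemma W1_le {U : Type*} [MetricSpace U] [MeasurableSpace U] {ν ν' : Measure U} {c : ℝ}
    (hc : 0 ≤ c) (h : ∀ f : U → ℝ, LipschitzWith 1 f → ∫ x, f x ∂ν - ∫ x, f x ∂ν' ≤ c) :
    W1 ν ν' ≤ c :=
  Real.iSup_le (fun f => h f.1 f.2) hc

section W1

variable {U : Type*} [Fintype U] [MetricSpace U] [MeasurableSpace U] [BorelSpace U]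

lemma integral_sub_integral_le_diam (ν ν' : Measure U) [IsProbabilityMeasure ν]
    [IsProbabilityMeasure ν'] {f : U → ℝ} (hf : LipschitzWith 1 f) :
    ∫ x, f x ∂ν - ∫ x, f x ∂ν' ≤ Metric.diam (Set.univ : Set U) := by
  set D := Metric.diam (Set.univ : Set U)
  have hfD : ∀ x y, f x ≤ f y + D := fun x y => by
    have h₁ := (le_abs_self _).trans (hf.dist_le_mul x y)
    have h₂ := Metric.dist_le_diam_of_mem (Set.finite_univ (α := U)).isBounded trivial trivial
      (x := x) (y := y)
    rw [NNReal.coe_one, one_mul] at h₁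
    linarith
  have hν : ∀ y, ∫ x, f x ∂ν ≤ f y + D := fun y => by
    simpa using integral_mono (μ := ν) .of_finite (integrable_const _) (fun x => hfD x y)
  have hν' : ∫ x, f x ∂ν - D ≤ ∫ y, f y ∂ν' := by
    simpa using integral_mono (μ := ν') (f := fun _ => ∫ x, f x ∂ν - D) (integrable_const _)
      .of_finite (fun y => by linarith [hν y])
  linarith

lemma le_W1 (ν ν' : Measure U) [IsProbabilityMeasure ν] [IsProbabilityMeasure ν']
    {f : U → ℝ} (hf : LipschitzWith 1 f) : ∫ x, f x ∂ν - ∫ x, f x ∂ν' ≤ W1 ν ν' :=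
  le_ciSup (f := fun f : {f : U → ℝ // LipschitzWith 1 f} => ∫ x, f.1 x ∂ν - ∫ x, f.1 x ∂ν')
    ⟨_, by rintro _ ⟨f, rfl⟩; exact integral_sub_integral_le_diam ν ν' f.2⟩ ⟨f, hf⟩

lemma W1_nonneg (ν ν' : Measure U) [IsProbabilityMeasure ν] [IsProbabilityMeasure ν'] :
    0 ≤ W1 ν ν' := by
  simpa using le_W1 ν ν' ((LipschitzWith.const (0 : ℝ)).weaken zero_le_one)

end W1

section FiniteSpace

variable {U : Type*} [Fintype U] [MeasurableSpace U]

noncomputable def measureOfWeights (w : U → ℝ) : Measure U :=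
  ∑ u, ENNReal.ofReal (w u) • Measure.dirac u

lemma isProbabilityMeasure_measureOfWeights {w : U → ℝ} (hw : w ∈ stdSimplex ℝ U) :
    IsProbabilityMeasure (measureOfWeights w) := by
  constructor
  simp [measureOfWeights, ← ENNReal.ofReal_sum_of_nonneg fun u _ => hw.1 u, hw.2]

variable [MeasurableSingletonClass U]

lemma measureOfWeights_real_singleton {w : U → ℝ} (hw : ∀ u, 0 ≤ w u) (u : U) :
    (measureOfWeights w).real {u} = w u := by
  classical
  simp [measureOfWeights, Measure.real, Set.indicator, hw u]

lemma measureReal_singleton_mem_stdSimplex (ν : Measure U) [IsProbabilityMeasure ν] :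
    (fun u => ν.real {u}) ∈ stdSimplex ℝ U :=
  ⟨fun _ => measureReal_nonneg, by simp⟩

lemma integral_eq_sum_measureReal_singleton_mul (ν : Measure U) [IsFiniteMeasure ν]
    (f : U → ℝ) : ∫ x, f x ∂ν = ∑ u, ν.real {u} * f u := by
  simpa using integral_fintype (μ := ν) (f := f) .of_finite

lemma tendsto_integral_of_tendsto_measureReal_singleton {ι : Type*} {l : Filter ι}
    {ν : ι → Measure U} [∀ i, IsFiniteMeasure (ν i)] {ν₀ : Measure U} [IsFiniteMeasure ν₀]
    (h : ∀ u, Tendsto (fun i => (ν i).real {u}) l (𝓝 (ν₀.real {u}))) (f : U → ℝ) :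
    Tendsto (fun i => ∫ x, f x ∂ν i) l (𝓝 (∫ x, f x ∂ν₀)) := by
  simp_rw [integral_eq_sum_measureReal_singleton_mul]
  exact tendsto_finsetSum _ fun u _ => (h u).mul_const _

lemma measurable_of_measurable_measureReal_singleton {A : Type*} [MeasurableSpace A]
    {κ : A → Measure U} [∀ a, IsFiniteMeasure (κ a)]
    (h : ∀ u, Measurable fun a => (κ a).real {u}) : Measurable κ := by
  refine Measure.measurable_of_measurable_coe _ fun s hs => ?_
  simp_rw [← Measure.tsum_indicator_apply_singleton _ s hs]
  refine Measurable.tsum fun u => ?_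
  by_cases hu : u ∈ s
  · simpa [hu, ofReal_measureReal] using (h u).ennreal_ofReal
  · simp [hu]

end FiniteSpace

section Separated

variable {U : Type*} [MetricSpace U] {δ : ℝ} (hsep : ∀ u v : U, u ≠ v → δ ≤ dist u v)
include hsep

lemma lipschitzWith_indicator_singleton (hδ : 0 ≤ δ) (u : U) :
    LipschitzWith 1 (Set.indicator {u} fun _ => δ) := by
  refine LipschitzWith.of_dist_le_mul fun x y => ?_
  rcases eq_or_ne x y with rfl | hxy
  · simp
  rw [NNReal.coe_one, one_mul, Real.dist_eq]
  by_cases hx : x = u <;> by_cases hy : y = u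
  · exact absurd (hx.trans hy.symm) hxy
  · simpa [hx, hy, abs_of_nonneg hδ] using hsep x y hxy
  · simpa [hx, hy, abs_of_nonneg hδ] using hsep x y hxy
  · simp [hx, hy]

variable [Fintype U] [MeasurableSpace U] [BorelSpace U]

lemma lipschitzWith_measureReal_singleton {S : Type*} [PseudoMetricSpace S] (hδ : 0 < δ)
    {L : ℝ} {κ : S → Measure U} [∀ y, IsProbabilityMeasure (κ y)]
    (hL : ∀ y y', W1 (κ y) (κ y') ≤ L * dist y y') :
    LipschitzWith (L / δ).toNNReal (fun y u => (κ y).real {u}) := by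
  have key : ∀ y y' u, (κ y).real {u} - (κ y').real {u} ≤ (L / δ).toNNReal * dist y y' := by
    intro y y' u
    have h := (le_W1 (κ y) (κ y') (lipschitzWith_indicator_singleton hsep hδ.le u)).trans (hL y y')
    simp only [integral_indicator_const _ (measurableSet_singleton u), smul_eq_mul] at h
    calc (κ y).real {u} - (κ y').real {u} ≤ L / δ * dist y y' := by
          rw [div_mul_eq_mul_div, le_div_iff₀ hδ]; linarith
      _ ≤ (L / δ).toNNReal * dist y y' := by gcongr; exact Real.le_coe_toNNReal _
  refine LipschitzWith.of_dist_le_mul fun y y' => (dist_pi_le_iff (by positivity)).2 fun u => ?_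
  rw [Real.dist_eq, abs_sub_le_iff]
  exact ⟨key y y' u, dist_comm y y' ▸ key y' y u⟩

end Separated

lemma W1_le_of_tendsto {U : Type*} [Fintype U] [MetricSpace U] [MeasurableSpace U]
    [BorelSpace U] {ν ν' : ℕ → Measure U} [∀ n, IsProbabilityMeasure (ν n)]
    [∀ n, IsProbabilityMeasure (ν' n)] {ν₀ ν₀' : Measure U} [IsProbabilityMeasure ν₀]
    [IsProbabilityMeasure ν₀']
    (hlim : ∀ u, Tendsto (fun n => (ν n).real {u}) atTop (𝓝 (ν₀.real {u})))
    (hlim' : ∀ u, Tendsto (fun n => (ν' n).real {u}) atTop (𝓝 (ν₀'.real {u})))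
    {c : ℝ} (hc : ∀ n, W1 (ν n) (ν' n) ≤ c) : W1 ν₀ ν₀' ≤ c :=
  W1_le ((W1_nonneg _ _).trans (hc 0)) fun f hf =>
    le_of_tendsto' ((tendsto_integral_of_tendsto_measureReal_singleton hlim f).sub
      (tendsto_integral_of_tendsto_measureReal_singleton hlim' f))
      fun n => (le_W1 _ _ hf).trans (hc n)

lemma exists_subseq_tendsto_of_lipschitzWith {S β : Type*} [MetricSpace S] [CompactSpace S]
    [MetricSpace β] {C : Set β} (hC : IsCompact C) {K : ℝ≥0} {F : ℕ → S → β}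
    (hF : ∀ n, LipschitzWith K (F n)) (hFC : ∀ n y, F n y ∈ C) :
    ∃ p : S → β, Continuous p ∧ (∀ y, p y ∈ C) ∧ ∃ φ : ℕ → ℕ, StrictMono φ ∧
      ∀ y, Tendsto (fun k => F (φ k) y) atTop (𝓝 (p y)) := by
  let G : ℕ → S →ᵇ β := fun n => .mkOfCompact ⟨F n, (hF n).continuous⟩
  have hequi : Equicontinuous ((↑) : Set.range G → S → β) :=
    (LipschitzWith.uniformEquicontinuous _ K (by rintro ⟨_, n, rfl⟩; exact hF n)).equicontinuous
  obtain ⟨g, -, φ, hφ, hg⟩ := (BoundedContinuousFunction.arzela_ascoli C hC (Set.range G)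
    (by rintro _ y ⟨n, rfl⟩; exact hFC n y) hequi).isSeqCompact fun n => subset_closure ⟨n, rfl⟩
  have hgy : ∀ y, Tendsto (fun k => F (φ k) y) atTop (𝓝 (g y)) := fun y =>
    ((continuous_eval_const y).tendsto g).comp hg
  exact ⟨g, g.continuous,
    fun y => hC.isClosed.mem_of_tendsto (hgy y) (.of_forall fun k => hFC _ y), φ, hφ, hgy⟩

lemma jointMeasure_eq_compProd {A U : Type*} [MeasurableSpace A] [MeasurableSpace U]
    (μ : Measure A) [SFinite μ] (κ : Kernel A U) [IsSFiniteKernel κ] :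
    jointMeasure μ κ = μ ⊗ₘ κ := by
  have hprod : ∀ a {s : Set (A × U)}, MeasurableSet s →
      (Measure.dirac a).prod (κ a) s = κ a (Prod.mk a ⁻¹' s) := fun a s hs => by
    rw [Measure.dirac_prod, Measure.map_apply measurable_prodMk_left hs]
  have hmeas : Measurable fun a => (Measure.dirac a).prod (κ a) :=
    Measure.measurable_of_measurable_coe _ fun s hs => by
      simp_rw [hprod _ hs]; exact Kernel.measurable_kernel_prodMk_left hs
  ext s hs
  rw [jointMeasure, Measure.bind_apply hs hmeas.aemeasurable, Measure.compProd_apply hs]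
  exact lintegral_congr fun a => hprod a hs

lemma eq_compProd_of_tendsto {A U : Type*} [TopologicalSpace A] [MeasurableSpace A]
    [TopologicalSpace U] [MeasurableSpace U] [HasOuterApproxClosed (A × U)] [BorelSpace (A × U)]
    {μ : Measure A} [IsFiniteMeasure μ] {κ : ℕ → Kernel A U} [∀ n, IsMarkovKernel (κ n)]
    {η : Kernel A U} [IsMarkovKernel η] {ρ : Measure (A × U)} [IsFiniteMeasure ρ]
    (hρ : ∀ g : A × U →ᵇ ℝ, Tendsto (fun n => ∫ z, g z ∂(μ ⊗ₘ κ n)) atTop (𝓝 (∫ z, g z ∂ρ)))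
    (hκ : ∀ a (f : U →ᵇ ℝ), Tendsto (fun n => ∫ u, f u ∂(κ n a)) atTop (𝓝 (∫ u, f u ∂(η a)))) :
    ρ = μ ⊗ₘ η := by
  refine ext_of_forall_integral_eq_of_IsFiniteMeasure fun g => tendsto_nhds_unique (hρ g) ?_
  simp_rw [Measure.integral_compProd (g.integrable _)]
  refine tendsto_integral_of_dominated_convergence (fun _ => ‖g‖) (fun n => ?_)
    (integrable_const _) (fun n => .of_forall fun a => ?_) (.of_forall fun a => ?_)
  · exact g.continuous.stronglyMeasurable.integral_kernel_prod_right'.aestronglyMeasurable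
  · simpa using norm_integral_le_of_norm_le_const (μ := κ n a)
      (.of_forall fun u => g.norm_coe_le_norm (a, u))
  · exact hκ a (g.compContinuous ⟨Prod.mk a, by fun_prop⟩)

theorem stmt_9_general {X H : Type*}
    [MetricSpace X] [MeasurableSpace X] [BorelSpace X]
    [NormedAddCommGroup H] [MeasurableSpace H] [BorelSpace H]
    (S : Set H) (hS : IsCompact S)
    {U : Type*} [Fintype U] [MetricSpace U] [MeasurableSpace U] [BorelSpace U]
    (μxy : Measure (X × S)) [IsProbabilityMeasure μxy]
    (L : ℝ)
    (πn : ℕ → S → Measure U)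
    (hπnp : ∀ n (y : S), IsProbabilityMeasure (πn n y))
    (hπnLip : ∀ n (y y' : S), W1 (πn n y) (πn n y') ≤ L * dist y y')
    (h : Measure ((X × S) × U)) [IsProbabilityMeasure h]
    (hconv : ∀ f : BoundedContinuousFunction ((X × S) × U) ℝ,
      Tendsto (fun n => ∫ z, f z ∂(jointMeasure μxy (fun p => πn n p.2)))
        atTop (nhds (∫ z, f z ∂h))) :
    ∃ π : S → Measure U,
      (∀ y : S, IsProbabilityMeasure (π y)) ∧
      (∀ y y' : S, W1 (π y) (π y') ≤ L * dist y y') ∧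
      h = jointMeasure μxy (fun p => π p.2) := by
  have : CompactSpace S := isCompact_iff_compactSpace.mp hS
  obtain ⟨δ, hδ, hsep⟩ := exists_pos_le_dist_of_ne U
  have hw_lip := fun n => lipschitzWith_measureReal_singleton hsep hδ (hπnLip n)
  obtain ⟨p, hp_cont, hp_mem, φ, hφ, hp_lim⟩ := exists_subseq_tendsto_of_lipschitzWith
    (isCompact_stdSimplex ℝ U) hw_lip fun n y => measureReal_singleton_mem_stdSimplex (πn n y)
  let π y := measureOfWeights (p y)
  have hπ : ∀ y, IsProbabilityMeasure (π y) := fun y =>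
    isProbabilityMeasure_measureOfWeights (hp_mem y)
  have hπ_real : ∀ y u, (π y).real {u} = p y u := fun y =>
    measureOfWeights_real_singleton (hp_mem y).1
  have hlim : ∀ y u, Tendsto (fun k => (πn (φ k) y).real {u}) atTop (𝓝 ((π y).real {u})) :=
    fun y u => hπ_real y u ▸ tendsto_pi_nhds.1 (hp_lim y) u
  let κ (n : ℕ) : Kernel (X × S) U := ⟨fun a => πn n a.2,
    (measurable_of_measurable_measureReal_singleton fun u =>
      ((continuous_apply u).comp (hw_lip n).continuous).measurable).comp measurable_snd⟩
  let η : Kernel (X × S) U := ⟨fun a => π a.2,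
    (measurable_of_measurable_measureReal_singleton (κ := π) fun u => by
      simpa only [hπ_real] using (by fun_prop : Continuous fun y => p y u).measurable).comp
      measurable_snd⟩
  have (n : ℕ) : IsMarkovKernel (κ n) := ⟨fun a => hπnp n a.2⟩
  have : IsMarkovKernel η := ⟨fun a => hπ a.2⟩
  refine ⟨π, hπ, fun y y' => W1_le_of_tendsto (hlim y) (hlim y') fun k => hπnLip _ y y',
    (eq_compProd_of_tendsto (κ := fun k => κ (φ k)) (fun g => ?_) fun a f =>
      tendsto_integral_of_tendsto_measureReal_singleton (hlim a.2) f).trans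
    (jointMeasure_eq_compProd μxy η).symm⟩
  simp only [← jointMeasure_eq_compProd]
  exact (hconv g).comp hφ.tendsto_atTop

theorem stmt_9 {X H : Type*}
    [MetricSpace X] [CompactSpace X] [MeasurableSpace X] [BorelSpace X]
    [NormedAddCommGroup H] [InnerProductSpace ℝ H] [MeasurableSpace H] [BorelSpace H]
    (S : Set H) (hS : IsCompact S)
    {U : Type*} [Fintype U] [MetricSpace U] [MeasurableSpace U] [BorelSpace U]
    (μxy : Measure (X × S)) [IsProbabilityMeasure μxy]
    (L : ℝ) (hL : 0 ≤ L)
    (πn : ℕ → S → Measure U)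
    (hπnp : ∀ n (y : S), IsProbabilityMeasure (πn n y))
    (hπnLip : ∀ n (y y' : S), W1 (πn n y) (πn n y') ≤ L * dist y y')
    (h : Measure ((X × S) × U)) [IsProbabilityMeasure h]
    (hconv : ∀ f : BoundedContinuousFunction ((X × S) × U) ℝ,
      Tendsto (fun n => ∫ z, f z ∂(jointMeasure μxy (fun p => πn n p.2)))
        atTop (nhds (∫ z, f z ∂h))) :
    ∃ π : S → Measure U,
      (∀ y : S, IsProbabilityMeasure (π y)) ∧
      (∀ y y' : S, W1 (π y) (π y') ≤ L * dist y y') ∧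
      h = jointMeasure μxy (fun p => π p.2) :=
  stmt_9_general S hS μxy L πn hπnp hπnLip h hconv
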